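/- Let 𝔖_A, 𝔖_B be spaces of states with admissible effect spaces ℰ_A, ℰ_B, let I be a nonempty index set, σ_i ∈ 𝔖_A and τ_i ∈ 𝔖_B for i ∈ I, and σ ∈ 𝔖_A, τ ∈ 𝔖_B. Then the pointwise infimum ⨅_{i∈I} σ_i⊗̃τ_i is ≤ σ⊗̃τ (pointwise on ℰ_A × ℰ_B) if and only if: ⨅_{i∈I} σ_i ≤ σ, and ⨅_{i∈I} τ_i ≤ τ, and for every subset K with ∅ ⊊ K ⊊ I, either ⨅_{k∈K} σ_k ≤ σ or ⨅_{m∈I∖K} τ_m ≤ τ. -/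
import Mathlib


/-! ## The boolean domain 𝔅 -/

/-- The boolean domain `𝔅 = {⊥, Y, N}`. -/
inductive BD : Type where
  | bot : BD
  | Y : BD
  | N : BD
  deriving DecidableEq

namespace BD

instance : PartialOrder BD where
  le u v := u = bot ∨ u = v
  le_refl u := Or.inr rfl
  le_trans u v w huv hvw := by
    rcases huv with h | h
    · exact Or.inl h
    · subst h; exact hvw
  le_antisymm u v huv hvu := by
    rcases huv with h | h
    · rcases hvu with h' | h'
      · rw [h, h']
      · exact h'.symm
    · exact h

instance : OrderBot BD where
  bot := bot
  bot_le u := Or.inl rfl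

instance : SemilatticeInf BD where
  inf u v := if u = v then u else bot
  inf_le_left u v := by
    show (if u = v then u else bot) = bot ∨ (if u = v then u else bot) = u
    by_cases h : u = v
    · simp [h]
    · simp [h]
  inf_le_right u v := by
    show (if u = v then u else bot) = bot ∨ (if u = v then u else bot) = v
    by_cases h : u = v
    · simp [h]
    · simp [h]
  le_inf u v w huv huw := by
    show u = bot ∨ u = (if v = w then v else bot)
    rcases huv with h | h
    · exact Or.inl h
    · rcases huw with h' | h'
      · exact Or.inl h'
      · right
        rw [← h, ← h']
        simp

/-- The involution of `𝔅`, fixing `⊥` and exchanging `Y` and `N`. -/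
def inv : BD → BD
  | bot => bot
  | Y => N
  | N => Y

/-- The commutative monoid product `•` on `𝔅`. -/
def prod : BD → BD → BD
  | N, _ => N
  | _, N => N
  | Y, Y => Y
  | _, _ => bot

end BD

/-! ## Spaces of states -/

/-- A preorder is down-complete if every nonempty subset has a greatest lower bound. -/
def DownComplete (S : Type*) [Preorder S] : Prop :=
  ∀ T : Set S, T.Nonempty → ∃ g : S, IsGLB T g

/-- A state is pure (completely meet-irreducible) if it belongs to every nonempty
subset of which it is the greatest lower bound. -/
def PureState {S : Type*} [Preorder S] (σ : S) : Prop :=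
  ∀ T : Set S, T.Nonempty → IsGLB T σ → σ ∈ T

/-- `S` admits a description in terms of pure states: the pure states are exactly the
maximal elements, and every state is the infimum of the (nonempty) set of pure states
above it. -/
def PureDescription (S : Type*) [Preorder S] : Prop :=
  {σ : S | PureState σ} = {σ : S | IsMax σ} ∧
    ∀ σ : S, ({α : S | PureState α ∧ σ ≤ α}).Nonempty ∧
      IsGLB {α : S | PureState α ∧ σ ≤ α} σ

/-- `S` is a simplex: every state is the infimum of exactly one nonempty set of
pure states. -/
def Simplex (S : Type*) [Preorder S] : Prop :=
  ∀ σ : S, ∃! U : Set S, U.Nonempty ∧ (∀ α ∈ U, PureState α) ∧ IsGLB U σ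

/-- Distributivity of a meet-semilattice in Grätzer's sense. -/
def GDistrib (S : Type*) [SemilatticeInf S] : Prop :=
  ∀ σ σ₁ σ₂ : S, σ ≠ σ₁ → σ ≠ σ₂ → σ₁ ⊓ σ₂ ≤ σ →
    ∃ σ₁' σ₂' : S, σ₁ ≤ σ₁' ∧ σ₂ ≤ σ₂' ∧ σ = σ₁' ⊓ σ₂'

/-- Two elements admit a common upper bound. -/
def UpperBounded {S : Type*} [Preorder S] (σ σ' : S) : Prop :=
  ∃ η : S, σ ≤ η ∧ σ' ≤ η

/-- The relation `σ ⋈̌ σ'`. -/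
def Bowtie {S : Type*} [Preorder S] (σ σ' : S) : Prop :=
  ¬ UpperBounded σ σ' ∧
    (∀ σ'' : S, σ'' < σ' → UpperBounded σ σ'') ∧
    (∀ σ'' : S, σ'' < σ → UpperBounded σ' σ'')

/-- `star` is an orthocomplementation of the space of states `S`. -/
structure IsOrtho {S : Type*} [PartialOrder S] [OrderBot S] (star : S → S) : Prop where
  ne_bot : ∀ σ : S, σ ≠ ⊥ → star σ ≠ ⊥
  invol : ∀ σ : S, σ ≠ ⊥ → star (star σ) = σ
  anti : ∀ σ τ : S, σ ≠ ⊥ → τ ≠ ⊥ → σ ≤ τ → star τ ≤ star σ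
  bowtie : ∀ σ : S, σ ≠ ⊥ → Bowtie σ (star σ)

/-! ## Effects -/

/-- A map `a : S → 𝔅` preserves infima of nonempty subsets. -/
def PreservesInf {S : Type*} [Preorder S] (a : S → BD) : Prop :=
  ∀ T : Set S, T.Nonempty → ∀ g : S, IsGLB T g → IsGLB (a '' T) (a g)

/-- An admissible effect space for a space of states `S`. -/
structure IsAdmissible {S : Type*} [SemilatticeInf S] [OrderBot S]
    (E : Set (S → BD)) : Prop where
  preserves : ∀ a ∈ E, PreservesInf a
  infClosed : ∀ F : Set (S → BD), F ⊆ E → F.Nonempty →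
    ∀ f : S → BD, (∀ σ : S, IsGLB ((fun a => a σ) '' F) (f σ)) → f ∈ E
  invClosed : ∀ a ∈ E, (fun σ => BD.inv (a σ)) ∈ E
  constY : (fun _ : S => BD.Y) ∈ E
  constBot : (fun _ : S => BD.bot) ∈ E
  separating : ∀ σ : S, σ ≠ ⊥ → ∃ σ' : S, σ' ≠ ⊥ ∧ ∃ a ∈ E,
    (∀ η : S, a η = BD.Y ↔ σ ≤ η) ∧ (∀ η : S, a η = BD.N ↔ σ' ≤ η)

/-- The type of effects belonging to an effect space `E`. -/
abbrev Eff {S : Type*} (E : Set (S → BD)) : Type _ := {a : S → BD // a ∈ E}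

/-- The dual space `ℰ*` of an effect space. -/
def EStar {S : Type*} [Preorder S] (E : Set (S → BD)) : Set (Eff E → BD) :=
  {ψ | (∀ F : Set (Eff E), F.Nonempty → ∀ f : Eff E,
      (∀ σ : S, IsGLB ((fun a : Eff E => a.1 σ) '' F) (f.1 σ)) → IsGLB (ψ '' F) (ψ f)) ∧
    (∀ a abar : Eff E, (∀ σ : S, abar.1 σ = BD.inv (a.1 σ)) → ψ abar = BD.inv (ψ a)) ∧
    (∀ y : Eff E, (∀ σ : S, y.1 σ = BD.Y) → ψ y = BD.Y)}

/-- A completely meet-irreducible (pure) element of an effect space `E`,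
with respect to the pointwise order. -/
def PureEffect {S : Type*} [Preorder S] (E : Set (S → BD)) (l : S → BD) : Prop :=
  l ∈ E ∧ ∀ F : Set (S → BD), F ⊆ E → F.Nonempty →
    (∀ σ : S, IsGLB ((fun a => a σ) '' F) (l σ)) → l ∈ F

/-- A maximal element of an effect space `E`, with respect to the pointwise order. -/
def MaxEffect {S : Type*} [Preorder S] (E : Set (S → BD)) (l : S → BD) : Prop :=
  l ∈ E ∧ ∀ l' ∈ E, l ≤ l' → l = l'

open Classical in
/-- The effect `𝔩_(σ,σ')`: value `Y` on the upper set of `σ`, `N` on the upper set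
of `σ'`, and `⊥` elsewhere. -/
noncomputable def ellEff {S : Type*} [Preorder S] (σ σ' : S) : S → BD :=
  fun η => if σ ≤ η then BD.Y else if σ' ≤ η then BD.N else BD.bot

/-- The reduced effect space `Ē_𝔖` of an orthocomplemented space of states. -/
def ReducedEffects {S : Type*} [SemilatticeInf S] [OrderBot S] (star : S → S) :
    Set (S → BD) :=
  {a | PreservesInf a ∧
    ∀ σ σ' : S, a ⁻¹' {BD.Y} = {η : S | σ ≤ η} → a ⁻¹' {BD.N} = {η : S | σ' ≤ η} →
      star σ ≤ σ'}

/-! ## Tensor products -/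

/-- The pure tensor `σ ⊗̃ τ`, as a map on pairs of effects. -/
def pureT {SA SB : Type*} (EA : Set (SA → BD)) (EB : Set (SB → BD))
    (σ : SA) (τ : SB) : Eff EA → Eff EB → BD :=
  fun a b => BD.prod (a.1 σ) (b.1 τ)

/-- The minimal tensor product: pointwise infima of nonempty families of pure tensors. -/
def MinTensor {SA SB : Type*} (EA : Set (SA → BD)) (EB : Set (SB → BD)) :
    Set (Eff EA → Eff EB → BD) :=
  {Φ | ∃ U : Set (SA × SB), U.Nonempty ∧
    ∀ (a : Eff EA) (b : Eff EB),
      IsGLB ((fun p : SA × SB => pureT EA EB p.1 p.2 a b) '' U) (Φ a b)}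

/-- The maximal tensor product `𝔖_A ⊗̌ 𝔖_B`. -/
def MaxTensor {SA SB : Type*} (EA : Set (SA → BD)) (EB : Set (SB → BD)) :
    Set (Eff EA → Eff EB → BD) :=
  {Φ |
    (∀ F : Set (Eff EA), F.Nonempty → ∀ f : Eff EA,
      (∀ σ : SA, IsGLB ((fun a : Eff EA => a.1 σ) '' F) (f.1 σ)) →
      ∀ b : Eff EB, IsGLB ((fun a : Eff EA => Φ a b) '' F) (Φ f b)) ∧
    (∀ G : Set (Eff EB), G.Nonempty → ∀ g : Eff EB,
      (∀ τ : SB, IsGLB ((fun b : Eff EB => b.1 τ) '' G) (g.1 τ)) →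
      ∀ a : Eff EA, IsGLB ((fun b : Eff EB => Φ a b) '' G) (Φ a g)) ∧
    (∀ a abar : Eff EA, ∀ yB : Eff EB,
      (∀ σ : SA, abar.1 σ = BD.inv (a.1 σ)) → (∀ τ : SB, yB.1 τ = BD.Y) →
      Φ abar yB = BD.inv (Φ a yB)) ∧
    (∀ b bbar : Eff EB, ∀ yA : Eff EA,
      (∀ τ : SB, bbar.1 τ = BD.inv (b.1 τ)) → (∀ σ : SA, yA.1 σ = BD.Y) →
      Φ yA bbar = BD.inv (Φ yA b)) ∧
    (∀ (yA : Eff EA) (yB : Eff EB),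
      (∀ σ : SA, yA.1 σ = BD.Y) → (∀ τ : SB, yB.1 τ = BD.Y) → Φ yA yB = BD.Y)}

/-- The regular tensor product `𝔖_A ⊗̂ 𝔖_B`. -/
def RegTensor {SA SB : Type*} (EA : Set (SA → BD)) (EB : Set (SB → BD)) :
    Set (Eff EA → Eff EB → BD) :=
  {Φ | Φ ∈ MaxTensor EA EB ∧
    (∀ (a : Eff EA) (nB : Eff EB), (∀ τ : SB, nB.1 τ = BD.N) → Φ a nB = BD.N) ∧
    (∀ (nA : Eff EA) (b : Eff EB), (∀ σ : SA, nA.1 σ = BD.N) → Φ nA b = BD.N) ∧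
    (∀ (a : Eff EA) (yB : Eff EB), (∀ τ : SB, yB.1 τ = BD.Y) → Φ a yB = BD.Y →
      ∀ (b bbar : Eff EB), (∀ τ : SB, bbar.1 τ = BD.inv (b.1 τ)) →
        (Φ a b = BD.Y ∧ Φ a bbar = BD.N) ∨ (Φ a b = BD.N ∧ Φ a bbar = BD.Y) ∨
          (Φ a b = BD.bot ∧ Φ a bbar = BD.bot)) ∧
    (∀ (b : Eff EB) (yA : Eff EA), (∀ σ : SA, yA.1 σ = BD.Y) → Φ yA b = BD.Y →
      ∀ (a abar : Eff EA), (∀ σ : SA, abar.1 σ = BD.inv (a.1 σ)) →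
        (Φ a b = BD.Y ∧ Φ abar b = BD.N) ∨ (Φ a b = BD.N ∧ Φ abar b = BD.Y) ∨
          (Φ a b = BD.bot ∧ Φ abar b = BD.bot)) ∧
    (∀ (a : Eff EA) (yB : Eff EB), (∀ τ : SB, yB.1 τ = BD.Y) → Φ a yB = BD.bot →
      ∀ (b b' : Eff EB), (∀ τ : SB, b.1 τ ⊓ b'.1 τ = BD.bot) →
        (Φ a b = BD.bot ∧ Φ a b' = BD.N) ∨ (Φ a b = BD.N ∧ Φ a b' = BD.bot) ∨
          (Φ a b = BD.bot ∧ Φ a b' = BD.bot)) ∧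
    (∀ (b : Eff EB) (yA : Eff EA), (∀ σ : SA, yA.1 σ = BD.Y) → Φ yA b = BD.bot →
      ∀ (a a' : Eff EA), (∀ σ : SA, a.1 σ ⊓ a'.1 σ = BD.bot) →
        (Φ a b = BD.bot ∧ Φ a' b = BD.N) ∨ (Φ a b = BD.N ∧ Φ a' b = BD.bot) ∨
          (Φ a b = BD.bot ∧ Φ a' b = BD.bot))}

/-- A completely meet-irreducible (pure) element of the minimal tensor product. -/
def PureInMin {SA SB : Type*} (EA : Set (SA → BD)) (EB : Set (SB → BD))
    (Φ : Eff EA → Eff EB → BD) : Prop :=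
  Φ ∈ MinTensor EA EB ∧
    ∀ F : Set (Eff EA → Eff EB → BD), F ⊆ MinTensor EA EB → F.Nonempty →
      (∀ (a : Eff EA) (b : Eff EB),
        IsGLB ((fun Ψ : Eff EA → Eff EB → BD => Ψ a b) '' F) (Φ a b)) → Φ ∈ F

/-- A bi-filter of `𝔖_A × 𝔖_B`. -/
def BiFilter {SA SB : Type*} [SemilatticeInf SA] [SemilatticeInf SB]
    (R : Set (SA × SB)) : Prop :=
  R.Nonempty ∧
    (∀ p q : SA × SB, p.1 ≤ q.1 → p.2 ≤ q.2 → p ∈ R → q ∈ R) ∧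
    (∀ (σ₁ σ₂ : SA) (τ : SB), (σ₁, τ) ∈ R → (σ₂, τ) ∈ R → (σ₁ ⊓ σ₂, τ) ∈ R) ∧
    (∀ (σ : SA) (τ₁ τ₂ : SB), (σ, τ₁) ∈ R → (σ, τ₂) ∈ R → (σ, τ₁ ⊓ τ₂) ∈ R)

/-- The bi-filter `𝔉̃` determined by a finite nonempty family of pure tensors. -/
def Ftilde {SA SB : Type*} (EA : Set (SA → BD)) (EB : Set (SB → BD))
    {ι : Type*} [Fintype ι] [Nonempty ι] (σ : ι → SA) (τ : ι → SB) :
    Set (SA × SB) :=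
  {p | ∀ (a : Eff EA) (b : Eff EB),
    Finset.univ.inf' Finset.univ_nonempty
      (fun i => pureT EA EB (σ i) (τ i) a b) ≤ pureT EA EB p.1 p.2 a b}


/-! ### Auxiliary lemmas -/

lemma BD.le_iff' (u v : BD) : u ≤ v ↔ u = BD.bot ∨ u = v := Iff.rfl

lemma BD.prod_eq_N_iff (x y : BD) : BD.prod x y = BD.N ↔ x = BD.N ∨ y = BD.N := by
  cases x <;> cases y <;> decide

lemma BD.prod_eq_Y_iff (x y : BD) : BD.prod x y = BD.Y ↔ x = BD.Y ∧ y = BD.Y := by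
  cases x <;> cases y <;> decide

lemma BD.inv_eq_N_iff (x : BD) : BD.inv x = BD.N ↔ x = BD.Y := by
  cases x <;> decide

lemma BD.prod_N_right (x : BD) : BD.prod x BD.N = BD.N := by cases x <;> rfl

lemma aux_glb_const {α : Type*} [PartialOrder α] {S : Set α} {g c : α}
    (hg : IsGLB S g) (hc : c ∈ S) (hsub : ∀ x ∈ S, x = c) : g = c :=
  le_antisymm (hg.1 hc) (hg.2 fun x hx => (hsub x hx) ▸ le_rfl)

lemma aux_isGLB_inf' {α ι : Type*} [SemilatticeInf α] (K : Finset ι) (hK : K.Nonempty)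
    (f : ι → α) : IsGLB (f '' ↑K) (K.inf' hK f) := by
  constructor
  · rintro x ⟨i, hi, rfl⟩
    exact Finset.inf'_le f hi
  · intro x hx
    exact Finset.le_inf' hK f fun i hi => hx ⟨i, hi, rfl⟩

lemma aux_inf'_const_on {α ι : Type*} [SemilatticeInf α] (K : Finset ι) (hK : K.Nonempty)
    (f : ι → α) (c : α) (h : ∀ i ∈ K, f i = c) : K.inf' hK f = c := by
  obtain ⟨i, hi⟩ := hK
  refine le_antisymm ((h i hi) ▸ Finset.inf'_le f hi) (Finset.le_inf' _ f fun j hj => ?_)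
  rw [h j hj]

lemma aux_mono {S : Type*} [SemilatticeInf S] {a : S → BD} (ha : PreservesInf a)
    {x y : S} (h : x ≤ y) : a x ≤ a y := by
  have hglb : IsGLB ({x, y} : Set S) x := by
    constructor
    · rintro z (rfl | rfl)
      · exact le_rfl
      · exact h
    · intro z hz
      exact hz (Set.mem_insert _ _)
  exact (ha {x, y} ⟨x, Or.inl rfl⟩ x hglb).1 ⟨y, Or.inr rfl, rfl⟩

lemma aux_eff_inf' {S ι : Type*} [SemilatticeInf S] {a : S → BD} (ha : PreservesInf a)
    (K : Finset ι) (hK : K.Nonempty) (f : ι → S) (c : BD)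
    (h : ∀ i ∈ K, a (f i) = c) : a (K.inf' hK f) = c := by
  obtain ⟨i, hi⟩ := hK
  have hglb := ha (f '' ↑K) ⟨f i, i, hi, rfl⟩ _ (aux_isGLB_inf' K ⟨i, hi⟩ f)
  refine aux_glb_const hglb ⟨f i, ⟨i, hi, rfl⟩, h i hi⟩ ?_
  rintro x ⟨y, ⟨j, hj, rfl⟩, rfl⟩
  exact h j hj

/-- If `a` is constantly `c ≠ ⊥` on a nonempty finite family and the family's infimum
is `≤ x`, then `a x = c`. -/
lemma aux_eff_val {S ι : Type*} [SemilatticeInf S] {a : S → BD} (ha : PreservesInf a)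
    (K : Finset ι) (hK : K.Nonempty) (f : ι → S) (c : BD) (hc : c ≠ BD.bot)
    (h : ∀ i ∈ K, a (f i) = c) {x : S} (hx : K.inf' hK f ≤ x) : a x = c := by
  have h1 : a (K.inf' hK f) = c := aux_eff_inf' ha K hK f c h
  have h2 : a (K.inf' hK f) ≤ a x := aux_mono ha hx
  rw [h1] at h2
  rcases h2 with h2 | h2
  · exact absurd h2 hc
  · exact h2.symm

/-- characterization of the order between a finite meet of pure tensors
and a pure tensor in the minimal tensor product. -/
theorem min_tensor_order_characterization {SA SB : Type*}
    [SemilatticeInf SA] [OrderBot SA] [SemilatticeInf SB] [OrderBot SB]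
    (hdcA : DownComplete SA) (hdcB : DownComplete SB)
    (EA : Set (SA → BD)) (EB : Set (SB → BD))
    (hEA : IsAdmissible EA) (hEB : IsAdmissible EB)
    {ι : Type*} [Fintype ι] [DecidableEq ι] [Nonempty ι]
    (σ : ι → SA) (τ : ι → SB) (σ₀ : SA) (τ₀ : SB) :
    (∀ (a : Eff EA) (b : Eff EB),
        Finset.univ.inf' Finset.univ_nonempty
            (fun i => pureT EA EB (σ i) (τ i) a b) ≤ pureT EA EB σ₀ τ₀ a b) ↔
      (Finset.univ.inf' Finset.univ_nonempty σ ≤ σ₀ ∧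
       Finset.univ.inf' Finset.univ_nonempty τ ≤ τ₀ ∧
       ∀ (K : Finset ι) (hK : K.Nonempty) (hKu : K ≠ Finset.univ),
         K.inf' hK σ ≤ σ₀ ∨ (Kᶜ).inf' (Finset.nonempty_iff_ne_empty.mpr fun he => hKu ((Finset.compl_eq_empty_iff K).mp he)) τ ≤ τ₀) := by
  constructor
  · intro H
    refine ⟨?_, ?_, ?_⟩
    · by_contra hle
      have hs : Finset.univ.inf' Finset.univ_nonempty σ ≠ ⊥ := fun h => hle (h ▸ bot_le)
      obtain ⟨σ', hσ', a, haE, hY, hN⟩ := hEA.separating _ hs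
      have hB := H ⟨a, haE⟩ ⟨fun _ => BD.Y, hEB.constY⟩
      have hval : ∀ i ∈ Finset.univ, (fun i => pureT EA EB (σ i) (τ i)
          ⟨a, haE⟩ ⟨fun _ => BD.Y, hEB.constY⟩) i = BD.Y := by
        intro i _
        show BD.prod (a (σ i)) BD.Y = BD.Y
        rw [(hY (σ i)).mpr (Finset.inf'_le σ (Finset.mem_univ i))]
        rfl
      rw [aux_inf'_const_on _ _ _ _ hval] at hB
      have hprod : BD.prod (a σ₀) BD.Y = BD.Y := by
        rcases hB with h | h
        · exact absurd h (by decide)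
        · exact h.symm
      exact hle ((hY σ₀).mp ((BD.prod_eq_Y_iff _ _).mp hprod).1)
    · by_contra hle
      have ht : Finset.univ.inf' Finset.univ_nonempty τ ≠ ⊥ := fun h => hle (h ▸ bot_le)
      obtain ⟨τ', hτ', b, hbE, hY, hN⟩ := hEB.separating _ ht
      have hB := H ⟨fun _ => BD.Y, hEA.constY⟩ ⟨b, hbE⟩
      have hval : ∀ i ∈ Finset.univ, (fun i => pureT EA EB (σ i) (τ i)
          ⟨fun _ => BD.Y, hEA.constY⟩ ⟨b, hbE⟩) i = BD.Y := by
        intro i _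
        show BD.prod BD.Y (b (τ i)) = BD.Y
        rw [(hY (τ i)).mpr (Finset.inf'_le τ (Finset.mem_univ i))]
        rfl
      rw [aux_inf'_const_on _ _ _ _ hval] at hB
      have hprod : BD.prod BD.Y (b τ₀) = BD.Y := by
        rcases hB with h | h
        · exact absurd h (by decide)
        · exact h.symm
      exact hle ((hY τ₀).mp ((BD.prod_eq_Y_iff _ _).mp hprod).2)
    · intro K hK hKu
      by_contra hc
      push_neg at hc
      obtain ⟨h1, h2⟩ := hc
      have hs : K.inf' hK σ ≠ ⊥ := fun h => h1 (h ▸ bot_le)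
      have hKc : (Kᶜ : Finset ι).Nonempty := Finset.nonempty_iff_ne_empty.mpr
        fun he => hKu ((Finset.compl_eq_empty_iff K).mp he)
      have ht : (Kᶜ).inf' hKc τ ≠ ⊥ := fun h => h2 (h ▸ bot_le)
      obtain ⟨σ', hσ', a, haE, haY, haN⟩ := hEA.separating _ hs
      obtain ⟨τ', hτ', b, hbE, hbY, hbN⟩ := hEB.separating _ ht
      have habar : (fun η => BD.inv (a η)) ∈ EA := hEA.invClosed a haE
      have hbbar : (fun η => BD.inv (b η)) ∈ EB := hEB.invClosed b hbE
      have hB := H ⟨fun η => BD.inv (a η), habar⟩ ⟨fun η => BD.inv (b η), hbbar⟩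
      have hval : ∀ i ∈ Finset.univ, (fun i => pureT EA EB (σ i) (τ i)
          ⟨fun η => BD.inv (a η), habar⟩ ⟨fun η => BD.inv (b η), hbbar⟩) i = BD.N := by
        intro i _
        show BD.prod (BD.inv (a (σ i))) (BD.inv (b (τ i))) = BD.N
        by_cases hi : i ∈ K
        · rw [(haY (σ i)).mpr (Finset.inf'_le σ hi)]
          exact (BD.prod_eq_N_iff _ _).mpr (Or.inl rfl)
        · rw [(hbY (τ i)).mpr (Finset.inf'_le τ (Finset.mem_compl.mpr hi))]
          exact BD.prod_N_right _
      rw [aux_inf'_const_on _ _ _ _ hval] at hB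
      have hprod : BD.prod (BD.inv (a σ₀)) (BD.inv (b τ₀)) = BD.N := by
        rcases hB with h | h
        · exact absurd h (by decide)
        · exact h.symm
      rcases (BD.prod_eq_N_iff _ _).mp hprod with h | h
      · exact h1 ((haY σ₀).mp ((BD.inv_eq_N_iff _).mp h))
      · exact h2 ((hbY τ₀).mp ((BD.inv_eq_N_iff _).mp h))
  · rintro ⟨h1, h2, h3⟩ a b
    set g : ι → BD := fun i => pureT EA EB (σ i) (τ i) a b with hg
    rcases eq_or_ne (Finset.univ.inf' Finset.univ_nonempty g) BD.bot with hv | hv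
    · exact le_of_eq_of_le hv bot_le
    · have hall : ∀ i, g i = Finset.univ.inf' Finset.univ_nonempty g := by
        intro i
        have hle := Finset.inf'_le g (Finset.mem_univ i)
        rcases hle with h | h
        · exact absurd h hv
        · exact h.symm
      have hpa : PreservesInf a.1 := hEA.preserves a.1 a.2
      have hpb : PreservesInf b.1 := hEB.preserves b.1 b.2
      cases hvv : Finset.univ.inf' Finset.univ_nonempty g with
      | bot => exact absurd hvv hv
      | Y =>
        have hallY : ∀ i, g i = BD.Y := fun i => (hall i).trans hvv
        have hcomp : ∀ i, a.1 (σ i) = BD.Y ∧ b.1 (τ i) = BD.Y :=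
          fun i => (BD.prod_eq_Y_iff _ _).mp (hallY i)
        have ha0 : a.1 σ₀ = BD.Y :=
          aux_eff_val hpa Finset.univ Finset.univ_nonempty σ BD.Y (by decide)
            (fun i _ => (hcomp i).1) h1
        have hb0 : b.1 τ₀ = BD.Y :=
          aux_eff_val hpb Finset.univ Finset.univ_nonempty τ BD.Y (by decide)
            (fun i _ => (hcomp i).2) h2
        show BD.Y ≤ BD.prod (a.1 σ₀) (b.1 τ₀)
        rw [ha0, hb0]
        exact Or.inr rfl
      | N =>
        have hallN : ∀ i, g i = BD.N := fun i => (hall i).trans hvv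
        suffices h : BD.prod (a.1 σ₀) (b.1 τ₀) = BD.N by
          show BD.N ≤ BD.prod (a.1 σ₀) (b.1 τ₀)
          exact Or.inr h.symm
        rw [BD.prod_eq_N_iff]
        set K : Finset ι := Finset.univ.filter (fun i => a.1 (σ i) = BD.N) with hKdef
        by_cases hKu : K = Finset.univ
        · left
          refine aux_eff_val hpa Finset.univ Finset.univ_nonempty σ BD.N (by decide)
            (fun i _ => ?_) h1
          have hi : i ∈ K := hKu ▸ Finset.mem_univ i
          exact (Finset.mem_filter.mp hi).2
        · rcases Finset.eq_empty_or_nonempty K with hKe | hKn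
          · right
            refine aux_eff_val hpb Finset.univ Finset.univ_nonempty τ BD.N (by decide)
              (fun i _ => ?_) h2
            have hiK : i ∉ K := hKe ▸ Finset.notMem_empty i
            have haN : a.1 (σ i) ≠ BD.N := fun h =>
              hiK (Finset.mem_filter.mpr ⟨Finset.mem_univ i, h⟩)
            rcases (BD.prod_eq_N_iff _ _).mp (hallN i) with h | h
            · exact absurd h haN
            · exact h
          · rcases h3 K hKn hKu with hle | hle
            · left
              exact aux_eff_val hpa K hKn σ BD.N (by decide)
                (fun i hi => (Finset.mem_filter.mp hi).2) hle
            · right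
              refine aux_eff_val hpb Kᶜ (Finset.nonempty_iff_ne_empty.mpr
                fun he => hKu ((Finset.compl_eq_empty_iff K).mp he)) τ BD.N (by decide)
                (fun i hi => ?_) hle
              have hiK : i ∉ K := Finset.mem_compl.mp hi
              have haN : a.1 (σ i) ≠ BD.N := fun h =>
                hiK (Finset.mem_filter.mpr ⟨Finset.mem_univ i, h⟩)
              rcases (BD.prod_eq_N_iff _ _).mp (hallN i) with h | h
              · exact absurd h haN
              · exact h
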